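/- arXiv:2006.10085 — 5 statements merged into one kernel-verified Lean document; each statement's English description precedes it below -/
import Mathlib

section
/- Let A, B be nonempty finite sets in R^d with means μ_A, μ_B, and let c be a point not on the segment [μ_A, μ_B]. Let c' be the orthogonal projection of c onto [μ_A, μ_B]. Then Σ_{p∈A} ||p-c'||^2 < Σ_{p∈A} ||p-c||^2 and Σ_{p∈B} ||p-c'||^2 < Σ_{p∈B} ||p-c||^2. -/
open RealInnerProductSpace

lemma sum_sq_lt_of_mean {d : ℕ} (S : Finset (EuclideanSpace ℝ (Fin d)))
    (hS : S.Nonempty) (μ : EuclideanSpace ℝ (Fin d))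
    (hμ : μ = (S.card : ℝ)⁻¹ • ∑ p ∈ S, p) (x y : EuclideanSpace ℝ (Fin d))
    (h : ‖μ - x‖ ^ 2 < ‖μ - y‖ ^ 2) :
    ∑ p ∈ S, ‖p - x‖ ^ 2 < ∑ p ∈ S, ‖p - y‖ ^ 2 := by
  have hn : (0 : ℝ) < S.card := by exact_mod_cast Finset.card_pos.mpr hS
  have hs : ∑ p ∈ S, p = (S.card : ℝ) • μ := by
    rw [hμ, smul_inv_smul₀ (ne_of_gt hn)]
  have expand : ∀ z : EuclideanSpace ℝ (Fin d),
      ∑ p ∈ S, ‖p - z‖ ^ 2 =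
        ∑ p ∈ S, ‖p‖ ^ 2 - 2 * ((S.card : ℝ) * ⟪μ, z⟫) + (S.card : ℝ) * ‖z‖ ^ 2 := by
    intro z
    have : ∀ p ∈ S, ‖p - z‖ ^ 2 = ‖p‖ ^ 2 - 2 * ⟪p, z⟫ + ‖z‖ ^ 2 := fun p _ =>
      norm_sub_sq_real p z
    rw [Finset.sum_congr rfl this]
    rw [Finset.sum_add_distrib, Finset.sum_sub_distrib, ← Finset.mul_sum, ← sum_inner, hs,
      real_inner_smul_left, Finset.sum_const, nsmul_eq_mul]
  rw [expand x, expand y]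
  have hx := norm_sub_sq_real μ x
  have hy := norm_sub_sq_real μ y
  nlinarith [h]

theorem stmt_1 {d : ℕ} (A B : Finset (EuclideanSpace ℝ (Fin d)))
    (hA : A.Nonempty) (hB : B.Nonempty)
    (μA μB : EuclideanSpace ℝ (Fin d))
    (hμA : μA = (A.card : ℝ)⁻¹ • ∑ p ∈ A, p)
    (hμB : μB = (B.card : ℝ)⁻¹ • ∑ p ∈ B, p)
    (c c' : EuclideanSpace ℝ (Fin d))
    (hc : c ∉ segment ℝ μA μB)
    (hc'mem : c' ∈ segment ℝ μA μB)
    (hc'proj : ∀ y ∈ segment ℝ μA μB, ‖c - c'‖ ≤ ‖c - y‖) :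
    (∑ p ∈ A, ‖p - c'‖ ^ 2 < ∑ p ∈ A, ‖p - c‖ ^ 2) ∧
    (∑ p ∈ B, ‖p - c'‖ ^ 2 < ∑ p ∈ B, ‖p - c‖ ^ 2) := by
  have hconv : Convex ℝ (segment ℝ μA μB) := convex_segment μA μB
  haveI : Nonempty ↑(segment ℝ μA μB) := ⟨⟨c', hc'mem⟩⟩
  have hinf : ‖c - c'‖ = ⨅ w : segment ℝ μA μB, ‖c - w‖ := by
    apply le_antisymm
    · exact le_ciInf fun w => hc'proj w w.2
    · exact ciInf_le ⟨0, fun r ⟨w, hw⟩ => hw ▸ norm_nonneg _⟩ (⟨c', hc'mem⟩ : segment ℝ μA μB)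
  have hle : ∀ w ∈ segment ℝ μA μB, ⟪c - c', w - c'⟫ ≤ 0 :=
    (norm_eq_iInf_iff_real_inner_le_zero hconv hc'mem).mp hinf
  have hne : c - c' ≠ 0 := sub_ne_zero.mpr fun h => hc (h ▸ hc'mem)
  have hpos : 0 < ‖c - c'‖ ^ 2 := pow_pos (norm_pos_iff.mpr hne) 2
  have key : ∀ μ ∈ segment ℝ μA μB, ‖μ - c'‖ ^ 2 < ‖μ - c‖ ^ 2 := by
    intro μ hμ
    have h1 := hle μ hμ
    have h2 : μ - c = (μ - c') - (c - c') := by abel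
    have h3 : ‖(μ - c') - (c - c')‖ ^ 2 =
        ‖μ - c'‖ ^ 2 - 2 * ⟪μ - c', c - c'⟫ + ‖c - c'‖ ^ 2 := norm_sub_sq_real _ _
    have h4 : ⟪μ - c', c - c'⟫ = ⟪c - c', μ - c'⟫ := real_inner_comm _ _
    rw [h2, h3, h4]
    nlinarith
  refine ⟨sum_sq_lt_of_mean A hA μA hμA c' c ?_, sum_sq_lt_of_mean B hB μB hμB c' c ?_⟩
  · exact key μA (left_mem_segment ℝ μA μB)
  · exact key μB (right_mem_segment ℝ μA μB)
end

section
/- Any set of centers minimizing the fair k-means objective for two groups must have each center on the segment between the two group means of its cluster: if C = (c_1,...,c_k) minimizes Φ(C, U) = max{Δ(C, U∩A)/|A|, Δ(C, U∩B)/|B|} over all choices of centers for the fixed partition U, then each c_i lies on the segment [μ_i^A, μ_i^B]. -/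
open RealInnerProductSpace

section Aux
variable {E : Type*} [NormedAddCommGroup E] [InnerProductSpace ℝ E]

lemma my_decomp [DecidableEq E] (S : Finset E) (hS : S.Nonempty) (c : E) :
    ∑ p ∈ S, ‖p - c‖ ^ 2 =
      ∑ p ∈ S, ‖p - ((S.card : ℝ)⁻¹ • ∑ q ∈ S, q)‖ ^ 2 +
        (S.card : ℝ) * ‖((S.card : ℝ)⁻¹ • ∑ q ∈ S, q) - c‖ ^ 2 := by
  set μ : E := (S.card : ℝ)⁻¹ • ∑ q ∈ S, q with hμ
  have hcard : (S.card : ℝ) ≠ 0 := by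
    exact_mod_cast Finset.card_ne_zero.mpr hS
  have hsum : ∑ p ∈ S, (p - μ) = 0 := by
    rw [Finset.sum_sub_distrib, Finset.sum_const, hμ, ← Nat.cast_smul_eq_nsmul ℝ, smul_smul,
      mul_inv_cancel₀ hcard, one_smul, sub_self]
  have key : ∀ p ∈ S, ‖p - c‖ ^ 2 = ‖p - μ‖ ^ 2 + 2 * ⟪p - μ, μ - c⟫ + ‖μ - c‖ ^ 2 := by
    intro p _
    rw [show p - c = (p - μ) + (μ - c) by abel, norm_add_sq_real]
  rw [Finset.sum_congr rfl key, Finset.sum_add_distrib, Finset.sum_add_distrib]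
  have h0 : ∑ p ∈ S, 2 * ⟪p - μ, μ - c⟫ = 0 := by
    rw [← Finset.mul_sum, ← sum_inner, hsum, inner_zero_left, mul_zero]
  rw [h0, add_zero, Finset.sum_const, nsmul_eq_mul]

lemma my_proj (x y z : E) [CompleteSpace E] (h : z ∉ segment ℝ x y) :
    ∃ v ∈ segment ℝ x y, ∀ w ∈ segment ℝ x y, ‖w - v‖ < ‖w - z‖ := by
  have hconv : Convex ℝ (segment ℝ x y) := convex_segment x y
  have hcomp : IsCompact (segment ℝ x y) := by
    rw [segment_eq_image ℝ x y]
    exact isCompact_Icc.image (by continuity)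
  obtain ⟨v, hv, hvmin⟩ := exists_norm_eq_iInf_of_complete_convex
    ⟨x, left_mem_segment ℝ x y⟩ hcomp.isComplete hconv z
  refine ⟨v, hv, fun w hw => ?_⟩
  have hiff : ⟪z - v, w - v⟫ ≤ 0 :=
    (norm_eq_iInf_iff_real_inner_le_zero hconv hv).mp hvmin w hw
  have hzv : v - z ≠ 0 := sub_ne_zero.mpr (fun h' => h (h' ▸ hv))
  have hpos : 0 < ‖v - z‖ ^ 2 := pow_pos (norm_pos_iff.mpr hzv) 2
  have hinner : 0 ≤ ⟪w - v, v - z⟫ := by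
    have he : ⟪w - v, v - z⟫ = -⟪z - v, w - v⟫ := by
      rw [real_inner_comm, show v - z = -(z - v) by abel, inner_neg_left]
    linarith [he ▸ neg_nonneg.mpr hiff]
  have hsq : ‖w - v‖ ^ 2 < ‖w - z‖ ^ 2 := by
    rw [show w - z = (w - v) + (v - z) by abel, norm_add_sq_real]
    nlinarith
  exact lt_of_pow_lt_pow_left₀ 2 (norm_nonneg _) hsq

lemma my_sum_lt [DecidableEq E] (S : Finset E) (hS : S.Nonempty) (μ c c' : E)
    (hμ : μ = ((S.card : ℝ)⁻¹ • ∑ q ∈ S, q)) (hlt : ‖μ - c'‖ < ‖μ - c‖) :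
    ∑ p ∈ S, ‖p - c'‖ ^ 2 < ∑ p ∈ S, ‖p - c‖ ^ 2 := by
  rw [my_decomp S hS c', my_decomp S hS c, ← hμ]
  have hcard : (0:ℝ) < S.card := by exact_mod_cast Finset.card_pos.mpr hS
  have : ‖μ - c'‖ ^ 2 < ‖μ - c‖ ^ 2 :=
    pow_lt_pow_left₀ hlt (norm_nonneg _) (by norm_num)
  nlinarith
end Aux

theorem stmt_3 {d k : ℕ} [DecidableEq (EuclideanSpace ℝ (Fin d))] (A B : Finset (EuclideanSpace ℝ (Fin d)))
    (Ucl : Fin k → Finset (EuclideanSpace ℝ (Fin d)))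
    (hA : ∀ i, (Ucl i ∩ A).Nonempty) (hB : ∀ i, (Ucl i ∩ B).Nonempty)
    (μA μB : Fin k → EuclideanSpace ℝ (Fin d))
    (hμA : ∀ i, μA i = ((Ucl i ∩ A).card : ℝ)⁻¹ • ∑ p ∈ Ucl i ∩ A, p)
    (hμB : ∀ i, μB i = ((Ucl i ∩ B).card : ℝ)⁻¹ • ∑ p ∈ Ucl i ∩ B, p)
    (Φ : (Fin k → EuclideanSpace ℝ (Fin d)) → ℝ)
    (hΦ : ∀ C, Φ C =
      max ((∑ i, ∑ p ∈ Ucl i ∩ A, ‖p - C i‖ ^ 2) / (A.card : ℝ))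
          ((∑ i, ∑ p ∈ Ucl i ∩ B, ‖p - C i‖ ^ 2) / (B.card : ℝ)))
    (C : Fin k → EuclideanSpace ℝ (Fin d))
    (hmin : ∀ C', Φ C ≤ Φ C') :
    ∀ i, C i ∈ segment ℝ (μA i) (μB i) := by
  intro i
  by_contra hseg
  obtain ⟨v, hv, hvlt⟩ := my_proj (μA i) (μB i) (C i) hseg
  set C' : Fin k → EuclideanSpace ℝ (Fin d) := Function.update C i v with hC'
  have hAcard : (0:ℝ) < A.card := by
    exact_mod_cast Finset.card_pos.mpr ((hA i).mono (Finset.inter_subset_right))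
  have hBcard : (0:ℝ) < B.card := by
    exact_mod_cast Finset.card_pos.mpr ((hB i).mono (Finset.inter_subset_right))
  have hstep : ∀ (X : Finset (EuclideanSpace ℝ (Fin d)))
      (hX : ∀ j, (Ucl j ∩ X).Nonempty)
      (μX : Fin k → EuclideanSpace ℝ (Fin d))
      (hμX : ∀ j, μX j = ((Ucl j ∩ X).card : ℝ)⁻¹ • ∑ p ∈ Ucl j ∩ X, p)
      (hμXi : μX i ∈ segment ℝ (μA i) (μB i)),
      ∑ j, ∑ p ∈ Ucl j ∩ X, ‖p - C' j‖ ^ 2 < ∑ j, ∑ p ∈ Ucl j ∩ X, ‖p - C j‖ ^ 2 := by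
    intro X hX μX hμX hμXi
    apply Finset.sum_lt_sum
    · intro j _
      rcases eq_or_ne j i with rfl | hj
      · exact le_of_lt (my_sum_lt _ (hX j) (μX j) _ _ (hμX j)
          (by simpa [hC', Function.update_self] using hvlt (μX j) hμXi))
      · simp [hC', Function.update_of_ne hj]
    · exact ⟨i, Finset.mem_univ i, my_sum_lt _ (hX i) (μX i) _ _ (hμX i)
        (by simpa [hC', Function.update_self] using hvlt (μX i) hμXi)⟩
  have hAlt := hstep A hA μA hμA (left_mem_segment ℝ _ _)
  have hBlt := hstep B hB μB hμB (right_mem_segment ℝ _ _)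
  have hΦlt : Φ C' < Φ C := by
    rw [hΦ, hΦ]
    exact max_lt_max (by gcongr) (by gcongr)
  exact absurd (hmin C') (not_le.mpr hΦlt)
end

section
/- Let f_A(x) = a + Σ_i α_i x_i^2 and f_B(x) = b + Σ_i β_i (l_i - x_i)^2 on the box Π_i [0, l_i], with α_i, β_i, l_i > 0, and let x* be a minimizer of f = max{f_A, f_B} over the box. If f_A(x*) > f_B(x*) then x* = 0, and x* = 0 is the unique minimizer in that case. -/
theorem stmt_9 {k : ℕ} (a b : ℝ) (ha : 0 ≤ a) (hb : 0 ≤ b)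
    (α β l : Fin k → ℝ)
    (hα : ∀ i, 0 < α i) (hβ : ∀ i, 0 < β i) (hl : ∀ i, 0 < l i)
    (fA fB : (Fin k → ℝ) → ℝ)
    (hfA : ∀ y, fA y = a + ∑ i, α i * y i ^ 2)
    (hfB : ∀ y, fB y = b + ∑ i, β i * (l i - y i) ^ 2)
    (box : Set (Fin k → ℝ)) (hbox : box = {x | ∀ i, x i ∈ Set.Icc 0 (l i)})
    (x : Fin k → ℝ) (hxmem : x ∈ box)
    (hxmin : ∀ y ∈ box, max (fA x) (fB x) ≤ max (fA y) (fB y))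
    (hgt : fA x > fB x) :
    x = 0 ∧ ∀ y ∈ box, (∀ z ∈ box, max (fA y) (fB y) ≤ max (fA z) (fB z)) → y = 0 := by
  subst hbox
  have hx : x = 0 := by
    by_contra hx0
    obtain ⟨i0, hi0⟩ : ∃ i, x i ≠ 0 := by
      by_contra h; push_neg at h; exact hx0 (funext h)
    have hSpos : 0 < ∑ i, α i * x i ^ 2 := by
      apply Finset.sum_pos'
      · intro i _; have := hα i; positivity
      · exact ⟨i0, Finset.mem_univ _, by have := hα i0; positivity⟩
    set S := ∑ i, α i * x i ^ 2 with hS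
    have hCnn : 0 ≤ ∑ i, β i * (2 * l i * x i) := Finset.sum_nonneg fun i _ => by
      have h1 := (hxmem i).1; have h2 := hl i; have h3 := hβ i; positivity
    set C := ∑ i, β i * (2 * l i * x i) with hC
    have hεpos : 0 < fA x - fB x := sub_pos.2 hgt
    set ε := fA x - fB x with hε
    have hδpos : 0 < min 1 (ε / (2 * (C + 1))) := lt_min one_pos (by positivity)
    set δ := min 1 (ε / (2 * (C + 1))) with hδ
    have hδ1 : δ ≤ 1 := min_le_left _ _
    have hδ2 : δ ≤ ε / (2 * (C + 1)) := min_le_right _ _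
    have hδ3 : δ * (2 * (C + 1)) ≤ ε := by
      rw [← le_div_iff₀ (by positivity)]; exact hδ2
    set t := (1 : ℝ) - δ with ht
    have ht0 : 0 ≤ t := by rw [ht]; linarith
    have ht1 : t < 1 := by rw [ht]; linarith
    set y := fun i => t * x i with hy
    have hymem : y ∈ {x : Fin k → ℝ | ∀ i, x i ∈ Set.Icc 0 (l i)} := by
      intro i
      have h1 := (hxmem i).1
      have h2 := (hxmem i).2
      refine ⟨show (0:ℝ) ≤ t * x i by positivity, show t * x i ≤ l i by nlinarith⟩
    have hsumy : ∑ i, α i * y i ^ 2 = t ^ 2 * S := by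
      rw [hS, Finset.mul_sum]
      exact Finset.sum_congr rfl fun i _ => by show α i * (t * x i) ^ 2 = _; ring
    have hfAy : fA y < fA x := by
      rw [hfA, hfA, hsumy, ← hS]
      nlinarith [mul_pos (mul_pos (sub_pos.2 ht1) (by linarith : (0:ℝ) < 1 + t)) hSpos]
    have hfBy : fB y < fA x := by
      rw [hfB]
      have hterm : ∀ i ∈ Finset.univ, β i * (l i - y i) ^ 2 ≤
          β i * (l i - x i) ^ 2 + δ * (β i * (2 * l i * x i)) := by
        intro i _
        have h1 := (hxmem i).1
        have h3 := hβ i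
        have hyi : y i = x i - δ * x i := by show t * x i = _; rw [ht]; ring
        rw [hyi]
        nlinarith [mul_nonneg (mul_nonneg h3.le hδpos.le) (sq_nonneg (x i)), hδ1]
      have hsum : ∑ i, β i * (l i - y i) ^ 2 ≤ (∑ i, β i * (l i - x i) ^ 2) + δ * C := by
        calc ∑ i, β i * (l i - y i) ^ 2
            ≤ ∑ i, (β i * (l i - x i) ^ 2 + δ * (β i * (2 * l i * x i))) :=
              Finset.sum_le_sum hterm
          _ = (∑ i, β i * (l i - x i) ^ 2) + δ * C := by
              rw [Finset.sum_add_distrib, hC, Finset.mul_sum]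
      have hδC : δ * C < ε := by nlinarith
      have hfBx : b + ∑ i, β i * (l i - x i) ^ 2 = fB x := (hfB x).symm
      have hεeq : ε = fA x - fB x := hε
      linarith
    have hcon := hxmin y hymem
    rw [max_eq_left hgt.le] at hcon
    rcases max_cases (fA y) (fB y) with ⟨h, _⟩ | ⟨h, _⟩ <;> rw [h] at hcon <;> linarith
  refine ⟨hx, fun y hymem' hymin => ?_⟩
  have h1 : max (fA y) (fB y) ≤ max (fA x) (fB x) := hymin x hxmem
  rw [max_eq_left hgt.le] at h1
  have hfAx : fA x = a := by rw [hfA, hx]; simp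
  have h2 : fA y ≤ a := le_trans (le_max_left _ _) (hfAx ▸ h1)
  rw [hfA] at h2
  have h3 : ∑ i, α i * y i ^ 2 ≤ 0 := by linarith
  have h4 : ∑ i, α i * y i ^ 2 = 0 :=
    le_antisymm h3 (Finset.sum_nonneg fun i _ => by have := hα i; positivity)
  funext i
  have h5 := (Finset.sum_eq_zero_iff_of_nonneg
    (fun i _ => by have := hα i; positivity)).1 h4 i (Finset.mem_univ i)
  have hαi := hα i
  have hsq : y i ^ 2 = 0 := by
    by_contra h
    have : 0 < y i ^ 2 := lt_of_le_of_ne (sq_nonneg _) (Ne.symm h)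
    nlinarith
  simpa [pow_eq_zero_iff] using hsq
end

section
/- Pareto optimality of the fair two-group solution: let x* minimize f(x) = max{f_A(x), f_B(x)} over the box Π_i [0, l_i], where f_A(x) = a + Σ_i α_i x_i^2 and f_B(x) = b + Σ_i β_i (l_i - x_i)^2 with α_i, β_i, l_i > 0. Then there is no other minimizer y of f with f_A(y) < f_A(x*) or f_B(y) < f_B(x*). -/
theorem stmt_10 {k : ℕ} (a b : ℝ) (ha : 0 ≤ a) (hb : 0 ≤ b)
    (α β l : Fin k → ℝ)
    (hα : ∀ i, 0 < α i) (hβ : ∀ i, 0 < β i) (hl : ∀ i, 0 < l i)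
    (fA fB : (Fin k → ℝ) → ℝ)
    (hfA : ∀ y, fA y = a + ∑ i, α i * y i ^ 2)
    (hfB : ∀ y, fB y = b + ∑ i, β i * (l i - y i) ^ 2)
    (box : Set (Fin k → ℝ)) (hbox : box = {x | ∀ i, x i ∈ Set.Icc 0 (l i)})
    (x : Fin k → ℝ) (hxmem : x ∈ box)
    (hxmin : ∀ y ∈ box, max (fA x) (fB x) ≤ max (fA y) (fB y)) :
    ∀ y ∈ box, (∀ z ∈ box, max (fA y) (fB y) ≤ max (fA z) (fB z)) →
      ¬(fA y < fA x ∨ fB y < fB x) := by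
  intro y hy hymin h
  set m := max (fA x) (fB x) with hm
  have hmy : max (fA y) (fB y) ≤ m := hymin x hxmem
  have hAy : fA y ≤ m := le_trans (le_max_left _ _) hmy
  have hBy : fB y ≤ m := le_trans (le_max_right _ _) hmy
  have hAx : fA x ≤ m := le_max_left _ _
  have hBx : fB x ≤ m := le_max_right _ _
  -- x ≠ y
  have hne : ∃ i, x i ≠ y i := by
    by_contra hc
    push_neg at hc
    have hxy : x = y := funext hc
    rcases h with h1 | h1 <;> rw [hxy] at h1 <;> exact lt_irrefl _ h1
  obtain ⟨i₀, hi₀⟩ := hne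
  -- midpoint
  set z : Fin k → ℝ := fun i => (x i + y i) / 2 with hz
  have hzbox : z ∈ box := by
    rw [hbox]
    intro i
    rw [hbox] at hxmem hy
    have h1 := hxmem i
    have h2 := hy i
    simp only [Set.mem_Icc] at h1 h2 ⊢
    constructor <;> simp only [hz] <;> nlinarith [h1.1, h1.2, h2.1, h2.2]
  -- positivity of the gap sums
  have hsq : 0 < (x i₀ - y i₀) ^ 2 := by
    have hne := sub_ne_zero.mpr hi₀
    positivity
  have hSA : 0 < ∑ i, α i * (x i - y i) ^ 2 := by
    apply Finset.sum_pos' (fun i _ => mul_nonneg (hα i).le (sq_nonneg _))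
    exact ⟨i₀, Finset.mem_univ _, mul_pos (hα i₀) hsq⟩
  have hSB : 0 < ∑ i, β i * (x i - y i) ^ 2 := by
    apply Finset.sum_pos' (fun i _ => mul_nonneg (hβ i).le (sq_nonneg _))
    exact ⟨i₀, Finset.mem_univ _, mul_pos (hβ i₀) hsq⟩
  -- strict convexity identities
  have hAz : fA z + (∑ i, α i * (x i - y i) ^ 2) / 4 = (fA x + fA y) / 2 := by
    simp only [hfA, hz]
    have h1 : (∑ i, α i * ((x i + y i) / 2) ^ 2) + (∑ i, α i * (x i - y i) ^ 2) / 4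
        = (∑ i, α i * (x i) ^ 2) / 2 + (∑ i, α i * (y i) ^ 2) / 2 := by
      rw [Finset.sum_div, Finset.sum_div, Finset.sum_div, ← Finset.sum_add_distrib,
        ← Finset.sum_add_distrib]
      exact Finset.sum_congr rfl fun i _ => by ring
    linarith [h1]
  have hBz : fB z + (∑ i, β i * (x i - y i) ^ 2) / 4 = (fB x + fB y) / 2 := by
    simp only [hfB, hz]
    have h1 : (∑ i, β i * (l i - (x i + y i) / 2) ^ 2) + (∑ i, β i * (x i - y i) ^ 2) / 4
        = (∑ i, β i * (l i - x i) ^ 2) / 2 + (∑ i, β i * (l i - y i) ^ 2) / 2 := by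
      rw [Finset.sum_div, Finset.sum_div, Finset.sum_div, ← Finset.sum_add_distrib,
        ← Finset.sum_add_distrib]
      exact Finset.sum_congr rfl fun i _ => by ring
    linarith [h1]
  -- z strictly beats m
  have hAzlt : fA z < m := by
    rcases h with h1 | h1
    · linarith
    · linarith
  have hBzlt : fB z < m := by
    rcases h with h1 | h1
    · linarith
    · linarith
  have := hxmin z hzbox
  exact absurd this (not_le.mpr (max_lt hAzlt hBzlt))
end

section
/- If the weighted k-means problem with weights 1/|A| on points of A and 1/|B| on points of B admits a polynomial-time c-approximation, then the fair k-means objective Φ(C, U_C) = max{Δ(C, U_C ∩ A)/|A|, Δ(C, U_C ∩ B)/|B|} admits a polynomial-time 2c-approximation. Specifically, if g(C) = Δ(C, U_C∩A)/|A| + Δ(C, U_C∩B)/|B|, S satisfies g(S) ≤ c · min_C g(C), and O' minimizes Φ, then Φ(S, U_S) ≤ 2c · Φ(O', U_{O'}). -/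
theorem stmt_11 {d k : ℕ} (hk : 0 < k)
    (A B : Finset (EuclideanSpace ℝ (Fin d))) (hA : A.Nonempty) (hB : B.Nonempty)
    (costA costB : (Fin k → EuclideanSpace ℝ (Fin d)) → ℝ)
    (hcostA : ∀ C, costA C =
      (∑ p ∈ A, (Finset.univ.inf' (Finset.univ_nonempty_iff.mpr ⟨⟨0, hk⟩⟩)
        fun i => ‖p - C i‖ ^ 2)) / (A.card : ℝ))
    (hcostB : ∀ C, costB C =
      (∑ p ∈ B, (Finset.univ.inf' (Finset.univ_nonempty_iff.mpr ⟨⟨0, hk⟩⟩)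
        fun i => ‖p - C i‖ ^ 2)) / (B.card : ℝ))
    (g Φ : (Fin k → EuclideanSpace ℝ (Fin d)) → ℝ)
    (hg : ∀ C, g C = costA C + costB C)
    (hΦ : ∀ C, Φ C = max (costA C) (costB C))
    (c : ℝ) (hc : 1 ≤ c)
    (S : Fin k → EuclideanSpace ℝ (Fin d))
    (hS : ∀ C, g S ≤ c * g C)
    (O' : Fin k → EuclideanSpace ℝ (Fin d))
    (hO' : ∀ C, Φ O' ≤ Φ C) :
    Φ S ≤ 2 * c * Φ O' := by
  have hnnA : ∀ C, 0 ≤ costA C := by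
    intro C
    rw [hcostA]
    apply div_nonneg _ (Nat.cast_nonneg _)
    apply Finset.sum_nonneg
    intro p _
    apply Finset.le_inf'
    intro i _
    positivity
  have hnnB : ∀ C, 0 ≤ costB C := by
    intro C
    rw [hcostB]
    apply div_nonneg _ (Nat.cast_nonneg _)
    apply Finset.sum_nonneg
    intro p _
    apply Finset.le_inf'
    intro i _
    positivity
  have h1 : Φ S ≤ g S := by
    rw [hΦ, hg]
    exact max_le (le_add_of_nonneg_right (hnnB S)) (le_add_of_nonneg_left (hnnA S))
  have h2 : g O' ≤ 2 * Φ O' := by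
    rw [hΦ, hg, two_mul]
    exact add_le_add (le_max_left _ _) (le_max_right _ _)
  calc Φ S ≤ g S := h1
    _ ≤ c * g O' := hS O'
    _ ≤ c * (2 * Φ O') := by
        apply mul_le_mul_of_nonneg_left h2 (by linarith)
    _ = 2 * c * Φ O' := by ring
end
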